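/- arXiv:2403.07329 — 3 statements merged into one kernel-verified Lean document; each statement's English description precedes it below -/
import Mathlib

section
/- Let k ≥ 1 and m ≥ 2. Fix θ ∈ ℝ^k, radii ρ, ρ' > 0, and a nonempty set N ⊆ ℝ^k with B̄(θ,ρ') ⊆ N ⊆ B̄(θ,ρ). Let μ be a Borel probability measure on ℝ^k and let n ≥ 1 be a real number with μ{ε : ‖ε‖₂ ≤ ρ'} ≥ 1 − 1/√n. For each domain e ∈ E = {0,…,m−1} let L_e : ℝ^k → ℝ be Borel measurable with 0 ≤ L_e(θ') ≤ M for all θ' ∈ ℝ^k (M ≥ 0), and let a_e ∈ ℝ (the population risk of domain e at θ) and constants C_e ∈ ℝ satisfy: a_s ≤ sup_{‖ε‖₂≤ρ} L_s(θ+ε) + C_s for the source index s ∈ E, and a_e ≤ ∫ L_e(θ+ε) dμ(ε) + C_e for every e ≠ s. Assume moreover L_s(θ') ≤ max_{e∈E} L_e(θ') for all θ' ∈ N. Then (1/m)·Σ_{e∈E} a_e ≤ sup_{‖ε‖₂≤ρ} L_s(θ+ε) + (1 − 1/m)·max_{e∈E} sup_{θ'∈N} |L_e(θ') − L_s(θ')|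 + (1/m)·C_s + (1 − 1/m)·(max_{e≠s} C_e + M/√n). -/
open MeasureTheory Metric Set

/-!
For every target domain `e ≠ s`, split the expectation over `μ` into the ball `‖ε‖ ≤ ρ'` and
its complement. On the ball, `θ + ε` lies in `N ⊆ B̄(θ, ρ)`, so
`L_e(θ + ε) ≤ L_s(θ + ε) + |L_e - L_s|(θ + ε)` is bounded by the SAM loss plus the loss
inconsistency; the complement has mass at most `1/√n` and there `L_e ≤ M`. Averaging this bound
over the `m - 1` target domains together with the source bound gives the theorem.
-/

noncomputable def lossInconsistency {X : Type*} (f g : X → ℝ) (N : Set X) : ℝ :=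
  sSup ((fun x => |g x - f x|) '' N)

lemma lossInconsistency_nonneg {X : Type*} (f g : X → ℝ) (N : Set X) :
    0 ≤ lossInconsistency f g N :=
  Real.sSup_nonneg (by rintro _ ⟨x, -, rfl⟩; exact abs_nonneg _)

lemma le_add_lossInconsistency {X : Type*} {f g : X → ℝ}
    (hfg : BddAbove (range fun x => |g x - f x|)) {N : Set X} {x : X} (hx : x ∈ N) :
    g x ≤ f x + lossInconsistency f g N := by
  have : |g x - f x| ≤ lossInconsistency f g N :=
    le_csSup (hfg.mono (image_subset_range _ _)) (mem_image_of_mem _ hx)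
  linarith [le_abs_self (g x - f x)]

section SamLoss

variable {E : Type*} [NormedAddCommGroup E]

noncomputable def samLoss (f : E → ℝ) (θ : E) (ρ : ℝ) : ℝ :=
  sSup ((fun ε => f (θ + ε)) '' closedBall 0 ρ)

lemma samLoss_nonneg {f : E → ℝ} (hf : ∀ x, 0 ≤ f x) (θ : E) (ρ : ℝ) : 0 ≤ samLoss f θ ρ :=
  Real.sSup_nonneg (by rintro _ ⟨ε, -, rfl⟩; exact hf _)

lemma le_samLoss {f : E → ℝ} (hf : BddAbove (range f)) {θ ε : E} {ρ : ℝ} (hε : ‖ε‖ ≤ ρ) :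
    f (θ + ε) ≤ samLoss f θ ρ :=
  le_csSup (hf.mono (image_subset_iff.2 fun _ _ => mem_range_self _))
    ⟨ε, by simpa using hε, rfl⟩

end SamLoss

theorem integral_le_add_mul_measureReal_compl {α : Type*} [MeasurableSpace α] {μ : Measure α}
    [IsProbabilityMeasure μ] {f : α → ℝ} {A : Set α} {B M : ℝ} (hf : Integrable f μ)
    (hA : MeasurableSet A) (hB : 0 ≤ B) (hfA : ∀ x ∈ A, f x ≤ B) (hfM : ∀ x ∉ A, f x ≤ M) :
    ∫ x, f x ∂μ ≤ B + M * μ.real Aᶜ := by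
  have hM : Integrable (Aᶜ.indicator fun _ => M) μ := (integrable_const M).indicator hA.compl
  calc ∫ x, f x ∂μ ≤ ∫ x, B + Aᶜ.indicator (fun _ => M) x ∂μ := by
        refine integral_mono hf ((integrable_const B).add hM) fun x => ?_
        by_cases hx : x ∈ A
        · simpa [hx] using hfA x hx
        · simp only [indicator_of_mem (mem_compl hx)]
          linarith [hfM x hx]
    _ = B + M * μ.real Aᶜ := by
        rw [integral_add (integrable_const B) hM, integral_const, integral_indicator_const _ hA.compl]
        simp [mul_comm]

theorem integral_comp_add_le_samLoss_add_lossInconsistency {E : Type*} [NormedAddCommGroup E]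
    [MeasurableSpace E] [BorelSpace E] {μ : Measure E} [IsProbabilityMeasure μ]
    {f g : E → ℝ} {θ : E} {ρ ρ' M : ℝ} {N : Set E}
    (hN_sub : closedBall θ ρ' ⊆ N) (hN_sup : N ⊆ closedBall θ ρ)
    (hf0 : ∀ x, 0 ≤ f x) (hfM : ∀ x, f x ≤ M)
    (hg : Measurable g) (hg0 : ∀ x, 0 ≤ g x) (hgM : ∀ x, g x ≤ M) :
    ∫ ε, g (θ + ε) ∂μ
      ≤ samLoss f θ ρ + lossInconsistency f g N + M * μ.real {ε | ‖ε‖ ≤ ρ'}ᶜ := by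
  have hf_bdd : BddAbove (range f) := ⟨M, by rintro _ ⟨x, rfl⟩; exact hfM x⟩
  have hfg_bdd : BddAbove (range fun x => |g x - f x|) := by
    refine ⟨M, ?_⟩
    rintro _ ⟨x, rfl⟩
    exact abs_sub_le_iff.2 ⟨by linarith [hf0 x, hgM x], by linarith [hg0 x, hfM x]⟩
  have hg_int : Integrable (fun ε => g (θ + ε)) μ :=
    .of_bound (hg.comp (measurable_const_add θ)).aestronglyMeasurable M
      (.of_forall fun ε => by rw [Real.norm_of_nonneg (hg0 _)]; exact hgM _)
  refine integral_le_add_mul_measureReal_compl hg_int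
    (measurableSet_le measurable_norm measurable_const)
    (add_nonneg (samLoss_nonneg hf0 θ ρ) (lossInconsistency_nonneg f g N))
    (fun ε hε => ?_) fun ε _ => hgM _
  have hεN : θ + ε ∈ N := hN_sub (by simpa [dist_eq_norm] using hε)
  have hερ : ‖ε‖ ≤ ρ := by simpa [dist_eq_norm] using hN_sup hεN
  linarith [le_add_lossInconsistency hfg_bdd hεN, le_samLoss hf_bdd (θ := θ) hερ]

theorem inv_card_mul_sum_le_of_forall_ne_le {ι : Type*} [Fintype ι] {a : ι → ℝ} {s : ι}
    {X Y : ℝ} (hs : a s ≤ X) (hne : ∀ e, e ≠ s → a e ≤ Y) :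
    (1 / (Fintype.card ι : ℝ)) * ∑ e, a e
      ≤ (1 / (Fintype.card ι : ℝ)) * X + (1 - 1 / (Fintype.card ι : ℝ)) * Y := by
  classical
  have hcard : 1 ≤ Fintype.card ι := Fintype.card_pos_iff.2 ⟨s⟩
  have hsum : ∑ e, a e ≤ X + ((Fintype.card ι : ℝ) - 1) * Y := by
    have hrest : ∑ e ∈ Finset.univ.erase s, a e ≤ ∑ _e ∈ Finset.univ.erase s, Y :=
      Finset.sum_le_sum fun e he => hne e (Finset.ne_of_mem_erase he)
    rw [Finset.sum_const, Finset.card_erase_of_mem (Finset.mem_univ s), Finset.card_univ,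
      nsmul_eq_mul, Nat.cast_sub hcard, Nat.cast_one] at hrest
    rw [← Finset.add_sum_erase _ _ (Finset.mem_univ s)]
    linarith
  have hpos : (0 : ℝ) < Fintype.card ι := by exact_mod_cast hcard
  calc (1 / (Fintype.card ι : ℝ)) * ∑ e, a e
      ≤ (1 / (Fintype.card ι : ℝ)) * (X + ((Fintype.card ι : ℝ) - 1) * Y) := by gcongr
    _ = _ := by field_simp

theorem udim_generalization_bound_general
    (k m : ℕ)
    (θ : EuclideanSpace ℝ (Fin k)) (ρ ρ' : ℝ)
    (N : Set (EuclideanSpace ℝ (Fin k)))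
    (hN_sub : closedBall θ ρ' ⊆ N) (hN_sup : N ⊆ closedBall θ ρ)
    (μ : Measure (EuclideanSpace ℝ (Fin k))) [IsProbabilityMeasure μ]
    (n : ℝ)
    (hμ : 1 - 1 / Real.sqrt n ≤ (μ {ε | ‖ε‖ ≤ ρ'}).toReal)
    (L : Fin m → EuclideanSpace ℝ (Fin k) → ℝ)
    (hL_meas : ∀ e, Measurable (L e))
    (M : ℝ) (hM : 0 ≤ M)
    (hL_nonneg : ∀ e θ', 0 ≤ L e θ') (hL_le : ∀ e θ', L e θ' ≤ M)
    (a C : Fin m → ℝ) (s : Fin m)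
    (h_source : a s ≤ sSup ((fun ε => L s (θ + ε)) '' closedBall 0 ρ) + C s)
    (h_target : ∀ e, e ≠ s → a e ≤ (∫ ε, L e (θ + ε) ∂μ) + C e) :
    (1 / (m : ℝ)) * ∑ e : Fin m, a e ≤
      sSup ((fun ε => L s (θ + ε)) '' closedBall 0 ρ)
        + (1 - 1 / (m : ℝ)) *
            (⨆ e : Fin m, sSup ((fun θ' => |L e θ' - L s θ'|) '' N))
        + (1 / (m : ℝ)) * C s
        + (1 - 1 / (m : ℝ)) *
            ((⨆ e : {e : Fin m // e ≠ s}, C e.1) + M / Real.sqrt n) := by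
  have h_tail : μ.real {ε | ‖ε‖ ≤ ρ'}ᶜ ≤ 1 / Real.sqrt n := by
    rw [probReal_compl_eq_one_sub (measurableSet_le measurable_norm measurable_const),
      measureReal_def]
    linarith
  have h_target' : ∀ e, e ≠ s → a e ≤ samLoss (L s) θ ρ
      + (⨆ e : Fin m, lossInconsistency (L s) (L e) N)
      + ((⨆ e : {e : Fin m // e ≠ s}, C e.1) + M / Real.sqrt n) := by
    intro e he
    have h_int := integral_comp_add_le_samLoss_add_lossInconsistency (μ := μ) hN_sub hN_sup
      (hL_nonneg s) (hL_le s) (hL_meas e) (hL_nonneg e) (hL_le e)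
    have hD := le_ciSup (finite_range fun e => lossInconsistency (L s) (L e) N).bddAbove e
    have hC := le_ciSup (finite_range fun e : {e : Fin m // e ≠ s} => C e.1).bddAbove ⟨e, he⟩
    have hM_tail := mul_le_mul_of_nonneg_left h_tail hM
    rw [mul_one_div] at hM_tail
    linarith [h_target e he]
  have key := inv_card_mul_sum_le_of_forall_ne_le h_source h_target'
  simp only [Fintype.card_fin, samLoss, lossInconsistency] at key
  linarith

/-- deterministic core of the UDIM generalization bound (Theorem 2).
The population risk averaged over all domains is bounded by the SAM loss on the
source domain, plus the cross-domain region-based loss inconsistency, plus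
residual constants. -/
theorem udim_generalization_bound
    (k m : ℕ) (hk : 1 ≤ k) (hm : 2 ≤ m)
    (θ : EuclideanSpace ℝ (Fin k)) (ρ ρ' : ℝ) (hρ : 0 < ρ) (hρ' : 0 < ρ')
    (N : Set (EuclideanSpace ℝ (Fin k))) (hN_ne : N.Nonempty)
    (hN_sub : closedBall θ ρ' ⊆ N) (hN_sup : N ⊆ closedBall θ ρ)
    (μ : Measure (EuclideanSpace ℝ (Fin k))) [IsProbabilityMeasure μ]
    (n : ℝ) (hn : 1 ≤ n)
    (hμ : 1 - 1 / Real.sqrt n ≤ (μ {ε | ‖ε‖ ≤ ρ'}).toReal)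
    (L : Fin m → EuclideanSpace ℝ (Fin k) → ℝ)
    (hL_meas : ∀ e, Measurable (L e))
    (M : ℝ) (hM : 0 ≤ M)
    (hL_nonneg : ∀ e θ', 0 ≤ L e θ') (hL_le : ∀ e θ', L e θ' ≤ M)
    (a C : Fin m → ℝ) (s : Fin m)
    (h_source : a s ≤ sSup ((fun ε => L s (θ + ε)) '' closedBall 0 ρ) + C s)
    (h_target : ∀ e, e ≠ s → a e ≤ (∫ ε, L e (θ + ε) ∂μ) + C e)
    (h_assum : ∀ θ' ∈ N, L s θ' ≤ ⨆ e : Fin m, L e θ') :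
    (1 / (m : ℝ)) * ∑ e : Fin m, a e ≤
      sSup ((fun ε => L s (θ + ε)) '' closedBall 0 ρ)
        + (1 - 1 / (m : ℝ)) *
            (⨆ e : Fin m, sSup ((fun θ' => |L e θ' - L s θ'|) '' N))
        + (1 / (m : ℝ)) * C s
        + (1 - 1 / (m : ℝ)) *
            ((⨆ e : {e : Fin m // e ≠ s}, C e.1) + M / Real.sqrt n) :=
  udim_generalization_bound_general k m θ ρ ρ' N hN_sub hN_sup μ n hμ L hL_meas M hM hL_nonneg hL_le
    a C s h_source h_target
end

section
/- Let k ≥ 1, θ ∈ ℝ^k, ρ > 0, and let N be a nonempty subset of the closed ball B̄(θ,ρ). Let E = {0,…,m−1} with m ≥ 1 and s ∈ E, and for each e ∈ E let L_e : ℝ^k → ℝ satisfy 0 ≤ L_e(θ') ≤ M for all θ' ∈ ℝ^k with M ≥ 0. Then for every c ∈ [0,1]: (1/m)·sup_{‖ε‖₂≤ρ} L_s(θ+ε) + (1 − 1/m)·c·max_{e∈E} sup_{θ'∈N} L_e(θ') ≤ sup_{‖ε‖₂≤ρ} L_s(θ+ε) + (1 − 1/m)·max_{e∈E} sup_{θ'∈N}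 |L_e(θ') − L_s(θ')|. -/
open MeasureTheory Metric

/-- the deterministic inequality (Eqs. 28–34) converting the
combination of the source-domain perturbed loss and the worst-case perturbed
loss over unknown domains into the SAM loss on the source domain plus the
cross-domain inconsistency term. -/
theorem udim_deterministic_inequality
    (k m : ℕ) (hk : 1 ≤ k) (hm : 1 ≤ m)
    (θ : EuclideanSpace ℝ (Fin k)) (ρ : ℝ) (hρ : 0 < ρ)
    (N : Set (EuclideanSpace ℝ (Fin k))) (hN_ne : N.Nonempty)
    (hN_sub : N ⊆ closedBall θ ρ)
    (s : Fin m) (L : Fin m → EuclideanSpace ℝ (Fin k) → ℝ)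
    (M : ℝ) (hM : 0 ≤ M)
    (hL_nonneg : ∀ e θ', 0 ≤ L e θ') (hL_le : ∀ e θ', L e θ' ≤ M)
    (c : ℝ) (hc0 : 0 ≤ c) (hc1 : c ≤ 1) :
    (1 / (m : ℝ)) * sSup ((fun ε => L s (θ + ε)) '' closedBall 0 ρ)
        + (1 - 1 / (m : ℝ)) * c * (⨆ e : Fin m, sSup (L e '' N)) ≤
      sSup ((fun ε => L s (θ + ε)) '' closedBall 0 ρ)
        + (1 - 1 / (m : ℝ)) *
            (⨆ e : Fin m, sSup ((fun θ' => |L e θ' - L s θ'|) '' N)) := by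
  haveI : Nonempty (Fin m) := ⟨⟨0, hm⟩⟩
  set A := sSup ((fun ε => L s (θ + ε)) '' closedBall 0 ρ) with hA
  set D := ⨆ e : Fin m, sSup ((fun θ' => |L e θ' - L s θ'|) '' N) with hD
  set B := ⨆ e : Fin m, sSup (L e '' N) with hB
  have hAne : ((fun ε => L s (θ + ε)) '' closedBall (0 : EuclideanSpace ℝ (Fin k)) ρ).Nonempty :=
    ⟨L s (θ + 0), ⟨0, by simp [le_of_lt hρ], rfl⟩⟩
  have hAbdd : BddAbove ((fun ε => L s (θ + ε)) '' closedBall (0 : EuclideanSpace ℝ (Fin k)) ρ) :=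
    ⟨M, fun x ⟨ε, _, hx⟩ => hx ▸ hL_le s (θ + ε)⟩
  -- A is an upper bound for L s on N
  have hLsA : ∀ θ' ∈ N, L s θ' ≤ A := by
    intro θ' hθ'
    have hmem : (θ' - θ) ∈ closedBall (0 : EuclideanSpace ℝ (Fin k)) ρ := by
      rw [mem_closedBall, dist_zero_right]
      have := hN_sub hθ'
      rw [mem_closedBall, dist_eq_norm] at this
      exact this
    have : L s (θ + (θ' - θ)) ≤ A :=
      le_csSup hAbdd ⟨θ' - θ, hmem, rfl⟩
    simpa using this
  -- D_e bounds and nonneg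
  have habsM : ∀ (e : Fin m) (θ' : EuclideanSpace ℝ (Fin k)), |L e θ' - L s θ'| ≤ M := by
    intro e θ'
    rw [abs_sub_le_iff]
    constructor
    · linarith [hL_le e θ', hL_nonneg s θ']
    · linarith [hL_le s θ', hL_nonneg e θ']
  have hDebdd : ∀ e : Fin m, BddAbove ((fun θ' => |L e θ' - L s θ'|) '' N) :=
    fun e => ⟨M, fun x ⟨θ', _, hx⟩ => hx ▸ habsM e θ'⟩
  have hDrange : BddAbove (Set.range fun e : Fin m => sSup ((fun θ' => |L e θ' - L s θ'|) '' N)) := by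
    refine ⟨M, fun x ⟨e, hx⟩ => ?_⟩
    subst hx
    exact csSup_le (hN_ne.image _) (fun x ⟨θ', _, hx⟩ => hx ▸ habsM e θ')
  -- B ≤ A + D
  have hBle : B ≤ A + D := by
    apply ciSup_le
    intro e
    apply csSup_le (hN_ne.image _)
    rintro x ⟨θ', hθ', rfl⟩
    have h1 : L e θ' ≤ L s θ' + |L e θ' - L s θ'| := by
      have := le_abs_self (L e θ' - L s θ'); linarith
    have h2 : |L e θ' - L s θ'| ≤ sSup ((fun θ'' => |L e θ'' - L s θ''|) '' N) :=
      le_csSup (hDebdd e) ⟨θ', hθ', rfl⟩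
    have h3 : sSup ((fun θ'' => |L e θ'' - L s θ''|) '' N) ≤ D :=
      le_ciSup hDrange e
    have h4 := hLsA θ' hθ'
    linarith
  -- nonnegativity facts
  have hAnonneg : 0 ≤ A := le_trans (hL_nonneg s (θ + 0)) (le_csSup hAbdd ⟨0, by simp [le_of_lt hρ], rfl⟩)
  obtain ⟨θ₀, hθ₀⟩ := id hN_ne
  have hDnonneg : 0 ≤ D := by
    have : (0 : ℝ) ≤ sSup ((fun θ' => |L s θ' - L s θ'|) '' N) :=
      le_trans (abs_nonneg _) (le_csSup (hDebdd s) ⟨θ₀, hθ₀, rfl⟩)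
    exact le_trans this (le_ciSup hDrange s)
  have hBrange : BddAbove (Set.range fun e : Fin m => sSup (L e '' N)) := by
    refine ⟨M, fun x ⟨e, hx⟩ => ?_⟩
    subst hx
    exact csSup_le (hN_ne.image _) (fun x ⟨θ', _, hx⟩ => hx ▸ hL_le e θ')
  have hBnonneg : 0 ≤ B := by
    have : (0 : ℝ) ≤ sSup (L s '' N) :=
      le_trans (hL_nonneg s θ₀) (le_csSup ⟨M, fun x ⟨θ', _, hx⟩ => hx ▸ hL_le s θ'⟩ ⟨θ₀, hθ₀, rfl⟩)
    exact le_trans this (le_ciSup hBrange s)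
  -- arithmetic
  have hm' : (0 : ℝ) < 1 / (m : ℝ) := by
    have : (0 : ℝ) < (m : ℝ) := by exact_mod_cast hm
    positivity
  have hm1 : 1 / (m : ℝ) ≤ 1 := by
    have h1 : (1 : ℝ) ≤ (m : ℝ) := by exact_mod_cast hm
    rw [div_le_one (by linarith)]
    exact h1
  have hcB : c * B ≤ B := by nlinarith
  have ht : 0 ≤ 1 - 1 / (m : ℝ) := by linarith
  nlinarith [mul_le_mul_of_nonneg_left hcB ht, mul_le_mul_of_nonneg_left hBle ht]
end

section
/- Let k ≥ 1, σ' > 0, and let μ be the law on ℝ^k of a random vector whose k coordinates are independent centered Gaussians N(0, σ'²). Let n ≥ 1 be a real number and set ρ' = σ'·(√k + √(log n)). Let θ ∈ ℝ^k, let N ⊆ ℝ^k contain the closed ball B̄(θ,ρ'), and let L : ℝ^k → ℝ be Borel measurable with 0 ≤ L(θ') ≤ M for all θ' ∈ ℝ^k, where M ≥ 0. Then ∫ L(θ+ε) dμ(ε) ≤ (1 − 1/√n)·sup_{θ'∈N} L(θ') + M/√n. -/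
open MeasureTheory Metric ProbabilityTheory

open Real
open scoped NNReal ENNReal

lemma pi_integral_pow {m : Measure ℝ} [SigmaFinite m] (k : ℕ) (f : ℝ → ℝ) :
    ∫ y : Fin k → ℝ, ∏ i, f (y i) ∂Measure.pi (fun _ => m) = (∫ x, f x ∂m) ^ k := by
  letI : MeasureSpace ℝ := ⟨m⟩
  haveI : SigmaFinite (volume : Measure ℝ) := ‹SigmaFinite m›
  have h : Measure.pi (fun _ : Fin k => m) = (volume : Measure (Fin k → ℝ)) := rfl
  rw [h]
  have := MeasureTheory.integral_fintype_prod_eq_pow (𝕜 := ℝ) (ι := Fin k) f (μ := m)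
  rw [← h]; simpa using this

lemma pi_integrable {m : Measure ℝ} [SigmaFinite m] (k : ℕ) (f : ℝ → ℝ)
    (hf : Integrable f m) :
    Integrable (fun y : Fin k → ℝ => ∏ i, f (y i)) (Measure.pi fun _ => m) := by
  letI : MeasureSpace ℝ := ⟨m⟩
  haveI : SigmaFinite (volume : Measure ℝ) := ‹SigmaFinite m›
  have h : Measure.pi (fun _ : Fin k => m) = (volume : Measure (Fin k → ℝ)) := rfl
  rw [h]
  exact Integrable.fintype_prod (f := fun _ : Fin k => f) (fun _ => hf)


lemma pdf_smul_eq {v : ℝ≥0} (hv : 0 < v) (c : ℝ) (x : ℝ) :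
    (gaussianPDFReal 0 v x).toNNReal • rexp (c * x ^ 2)
      = (Real.sqrt (2 * π * v))⁻¹ * rexp (-((2 * (v : ℝ))⁻¹ - c) * x ^ 2) := by
  rw [NNReal.smul_def, Real.coe_toNNReal _ (gaussianPDFReal_nonneg 0 v x), gaussianPDFReal]
  rw [smul_eq_mul, mul_assoc, ← Real.exp_add]
  congr 1
  have hv' : (v : ℝ) ≠ 0 := ne_of_gt (by exact_mod_cast hv)
  field_simp
  ring

lemma integral_exp_mul_sq_gaussianReal {v : ℝ≥0} (hv : 0 < v) {c : ℝ}
    (hc : c < (2 * (v : ℝ))⁻¹) :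
    ∫ x, rexp (c * x ^ 2) ∂gaussianReal 0 v = (Real.sqrt (1 - 2 * v * c))⁻¹ := by
  have hv' : (0:ℝ) < (v : ℝ) := by exact_mod_cast hv
  set b : ℝ := (2 * (v : ℝ))⁻¹ - c with hb
  have hbpos : 0 < b := by rw [hb]; linarith [hc]
  rw [gaussianReal_of_var_ne_zero 0 hv.ne']
  rw [show gaussianPDF 0 v = fun x => ((gaussianPDFReal 0 v x).toNNReal : ℝ≥0∞) from rfl,
    integral_withDensity_eq_integral_smul
    ((measurable_gaussianPDFReal 0 v).real_toNNReal) _]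
  simp_rw [pdf_smul_eq hv c]
  rw [integral_const_mul, integral_gaussian]
  have h2vb : 1 - 2 * (v:ℝ) * c = (2 * (v:ℝ)) * b := by
    rw [hb, mul_sub, mul_inv_cancel₀ (by positivity)]
  rw [h2vb]
  have hπ : (0:ℝ) < Real.sqrt π := Real.sqrt_pos.2 Real.pi_pos
  have h2v : (0:ℝ) < Real.sqrt (2 * (v:ℝ)) := Real.sqrt_pos.2 (by positivity)
  have hsb : (0:ℝ) < Real.sqrt b := Real.sqrt_pos.2 hbpos
  have h1 : Real.sqrt (π / b) = Real.sqrt π / Real.sqrt b := Real.sqrt_div Real.pi_pos.le b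
  have h2 : Real.sqrt (2 * π * (v:ℝ)) = Real.sqrt (2 * (v:ℝ)) * Real.sqrt π := by
    rw [show 2 * π * (v:ℝ) = (2 * (v:ℝ)) * π by ring, Real.sqrt_mul (by positivity)]
  have h3 : Real.sqrt ((2 * (v:ℝ)) * b) = Real.sqrt (2 * (v:ℝ)) * Real.sqrt b :=
    Real.sqrt_mul (by positivity) b
  rw [h1, h2, h3]
  field_simp

lemma integrable_exp_mul_sq_gaussianReal {v : ℝ≥0} (hv : 0 < v) {c : ℝ}
    (hc : c < (2 * (v : ℝ))⁻¹) :
    Integrable (fun x => rexp (c * x ^ 2)) (gaussianReal 0 v) := by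
  have hbpos : (0:ℝ) < (2 * (v : ℝ))⁻¹ - c := by linarith
  rw [gaussianReal_of_var_ne_zero 0 hv.ne',
    show gaussianPDF 0 v = fun x => ((gaussianPDFReal 0 v x).toNNReal : ℝ≥0∞) from rfl]
  refine (integrable_withDensity_iff_integrable_smul (E := ℝ)
      ((measurable_gaussianPDFReal 0 v).real_toNNReal)).2 ?_
  have : (fun x => (gaussianPDFReal 0 v x).toNNReal • rexp (c * x ^ 2))
      = fun x => (Real.sqrt (2 * π * v))⁻¹ * rexp (-((2 * (v : ℝ))⁻¹ - c) * x ^ 2) := by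
    funext x; exact pdf_smul_eq hv c x
  rw [this]
  exact (integrable_exp_neg_mul_sq hbpos).const_mul _

lemma pi_gauss_conc (k : ℕ) {v : ℝ≥0} (hv : 0 < v) {c : ℝ} (hc0 : 0 ≤ c)
    (hc : c < (2 * (v : ℝ))⁻¹) (r : ℝ) :
    ((Measure.pi fun _ : Fin k => gaussianReal 0 v) {y | r ≤ ∑ i, (y i) ^ 2}).toReal
      ≤ ((Real.sqrt (1 - 2 * v * c))⁻¹) ^ k * Real.exp (-(c * r)) := by
  set ν := Measure.pi fun _ : Fin k => gaussianReal 0 v with hν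
  set F : (Fin k → ℝ) → ℝ := fun y => ∏ i, rexp (c * (y i) ^ 2) with hF
  have hFalt : ∀ y, F y = rexp (c * ∑ i, (y i) ^ 2) := fun y => by
    show (∏ i, rexp (c * (y i) ^ 2)) = _
    rw [Finset.mul_sum, Real.exp_sum]
  have hint : Integrable F ν :=
    pi_integrable k _ (integrable_exp_mul_sq_gaussianReal hv hc)
  have hsub : {y : Fin k → ℝ | r ≤ ∑ i, (y i) ^ 2} ⊆ {y | rexp (c * r) ≤ F y} := by
    intro y hy
    show rexp (c * r) ≤ F y
    rw [hFalt y]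
    exact Real.exp_le_exp.2 (mul_le_mul_of_nonneg_left hy hc0)
  have hmarkov := mul_meas_ge_le_integral_of_nonneg
    (ae_of_all ν fun y => Finset.prod_nonneg fun i _ => (Real.exp_pos _).le) hint (rexp (c * r))
  have hintval : ∫ y, F y ∂ν = ((Real.sqrt (1 - 2 * v * c))⁻¹) ^ k := by
    rw [hF, hν, pi_integral_pow k (fun x => rexp (c * x ^ 2)),
      integral_exp_mul_sq_gaussianReal hv hc]
  have hmono : (ν {y | r ≤ ∑ i, (y i) ^ 2}).toReal ≤ (ν {y | rexp (c * r) ≤ F y}).toReal :=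
    ENNReal.toReal_mono (measure_ne_top _ _) (measure_mono hsub)
  have hexp : (0:ℝ) < rexp (c * r) := Real.exp_pos _
  have := hmarkov
  rw [hintval] at this
  calc (ν {y | r ≤ ∑ i, (y i) ^ 2}).toReal ≤ (ν {y | rexp (c * r) ≤ F y}).toReal := hmono
    _ ≤ ((Real.sqrt (1 - 2 * v * c))⁻¹) ^ k / rexp (c * r) := by
        rw [le_div_iff₀ hexp]; simp only [Measure.real] at this; rw [mul_comm]; exact this
    _ = ((Real.sqrt (1 - 2 * v * c))⁻¹) ^ k * rexp (-(c * r)) := by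
        rw [Real.exp_neg, div_eq_mul_inv]

set_option maxHeartbeats 1000000 in
/-- combining Gaussian norm concentration (Eq. 16, with
ρ' = σ'(√k + √(log n))) with the truncation argument of Eqs. 18–20: the
Gaussian-averaged perturbed loss is bounded by the supremum of the loss over
any neighborhood N of θ containing the ρ'-ball, plus M/√n. -/
theorem gaussian_expected_perturbed_loss_bound
    (k : ℕ) (hk : 1 ≤ k) (σ' : ℝ) (hσ' : 0 < σ')
    (μ : Measure (EuclideanSpace ℝ (Fin k)))
    (hμ : μ = Measure.map (MeasurableEquiv.toLp 2 (Fin k → ℝ))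
        (Measure.pi fun _ : Fin k => gaussianReal 0 (Real.toNNReal (σ' ^ 2))))
    (n : ℝ) (hn : 1 ≤ n)
    (ρ' : ℝ) (hρ' : ρ' = σ' * (Real.sqrt k + Real.sqrt (Real.log n)))
    (θ : EuclideanSpace ℝ (Fin k))
    (N : Set (EuclideanSpace ℝ (Fin k))) (hN : closedBall θ ρ' ⊆ N)
    (L : EuclideanSpace ℝ (Fin k) → ℝ) (hL : Measurable L)
    (M : ℝ) (hM : 0 ≤ M)
    (hL_nonneg : ∀ θ', 0 ≤ L θ') (hL_le : ∀ θ', L θ' ≤ M) :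
    (∫ ε, L (θ + ε) ∂μ) ≤
      (1 - 1 / Real.sqrt n) * sSup (L '' N) + M / Real.sqrt n := by
  -- notation
  set e := MeasurableEquiv.toLp 2 (Fin k → ℝ) with he
  set v : ℝ≥0 := Real.toNNReal (σ' ^ 2) with hvdef
  set ν : Measure (Fin k → ℝ) := Measure.pi fun _ : Fin k => gaussianReal 0 v with hνdef
  have hv : 0 < v := Real.toNNReal_pos.2 (by positivity)
  have hvr : (v : ℝ) = σ' ^ 2 := Real.coe_toNNReal _ (by positivity)
  have hvr0 : (0:ℝ) < (v : ℝ) := by rw [hvr]; positivity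
  have hk0 : (0:ℝ) < (k:ℝ) := by exact_mod_cast Nat.lt_of_lt_of_le Nat.zero_lt_one hk
  set sk := Real.sqrt k with hskdef
  set t := Real.sqrt (Real.log n) with htdef
  have hsk : 0 < sk := Real.sqrt_pos.2 hk0
  have ht : 0 ≤ t := Real.sqrt_nonneg _
  have hn0 : (0:ℝ) < n := lt_of_lt_of_le one_pos hn
  have hlog : 0 ≤ Real.log n := Real.log_nonneg hn
  have ht2 : t ^ 2 = Real.log n := Real.sq_sqrt hlog
  have hsk2 : sk ^ 2 = (k:ℝ) := Real.sq_sqrt hk0.le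
  have hskt : 0 < sk + t := by linarith
  have hρ'0 : 0 ≤ ρ' := by rw [hρ']; positivity
  -- the Chernoff parameter
  set c := t / (2 * (v:ℝ) * (sk + t)) with hcdef
  have hc0 : 0 ≤ c := by positivity
  have hc : c < (2 * (v:ℝ))⁻¹ := by
    rw [hcdef, inv_eq_one_div, div_lt_div_iff₀ (by positivity) (by positivity)]
    nlinarith
  -- concentration bound
  have h1m : 1 - 2 * (v:ℝ) * c = sk / (sk + t) := by
    rw [hcdef]
    field_simp
    ring
  have hsqn : (Real.sqrt n)⁻¹ = Real.exp (-(t ^ 2 / 2)) := by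
    have h1 : Real.sqrt n = Real.exp (Real.log n / 2) := by
      rw [Real.exp_half, Real.exp_log hn0]
    rw [ht2, h1, ← Real.exp_neg]
  have hconc : ((Real.sqrt (1 - 2 * v * c))⁻¹) ^ k * Real.exp (-(c * ρ' ^ 2))
      ≤ (Real.sqrt n)⁻¹ := by
    have hD : (Real.sqrt (1 - 2 * v * c))⁻¹ = Real.sqrt ((sk + t) / sk) := by
      rw [h1m, ← Real.sqrt_inv, inv_div]
    have hfrac : (sk + t) / sk = 1 + t / sk := by field_simp
    have hDle : (Real.sqrt (1 - 2 * v * c))⁻¹ ≤ Real.exp (t / sk / 2) := by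
      rw [hD, Real.exp_half, hfrac]
      exact Real.sqrt_le_sqrt (by linarith [Real.add_one_le_exp (t / sk)])
    have hpow : ((Real.sqrt (1 - 2 * v * c))⁻¹) ^ k ≤ Real.exp (sk * t / 2) := by
      calc ((Real.sqrt (1 - 2 * v * c))⁻¹) ^ k ≤ Real.exp (t / sk / 2) ^ k :=
            pow_le_pow_left₀ (by positivity) hDle k
        _ = Real.exp ((k:ℝ) * (t / sk / 2)) := (Real.exp_nat_mul _ k).symm
        _ = Real.exp (sk * t / 2) := by
            congr 1
            have hkk : (k:ℝ) = sk * sk := by rw [← hsk2]; ring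
            rw [hkk]; field_simp
    have hcr : c * ρ' ^ 2 = t * (sk + t) / 2 := by
      rw [hρ', hcdef, mul_pow, ← hvr]
      field_simp
    calc ((Real.sqrt (1 - 2 * v * c))⁻¹) ^ k * Real.exp (-(c * ρ' ^ 2))
        ≤ Real.exp (sk * t / 2) * Real.exp (-(c * ρ' ^ 2)) :=
          mul_le_mul_of_nonneg_right hpow (Real.exp_pos _).le
      _ = Real.exp (sk * t / 2 - t * (sk + t) / 2) := by rw [hcr, ← Real.exp_add]; ring_nf
      _ = Real.exp (-(t ^ 2 / 2)) := by congr 1; ring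
      _ = (Real.sqrt n)⁻¹ := hsqn.symm
  -- transfer to μ
  haveI : IsProbabilityMeasure μ := by
    rw [hμ]; exact Measure.isProbabilityMeasure_map (e.measurable.aemeasurable)
  set A : Set (EuclideanSpace ℝ (Fin k)) := closedBall 0 ρ' with hAdef
  have hA : MeasurableSet A := measurableSet_closedBall
  have hnorm : ∀ y : Fin k → ℝ, ‖e y‖ = Real.sqrt (∑ i, (y i) ^ 2) := by
    intro y
    rw [EuclideanSpace.norm_eq]
    congr 1
    refine Finset.sum_congr rfl fun i _ => ?_
    have : e y i = y i := by
      simp [he]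
    rw [this, Real.norm_eq_abs, sq_abs]
  have hpre : ⇑e ⁻¹' Aᶜ ⊆ {y : Fin k → ℝ | ρ' ^ 2 ≤ ∑ i, (y i) ^ 2} := by
    intro y hy
    have h1 : ρ' < ‖e y‖ := by
      have := hy
      simp only [Set.mem_preimage, Set.mem_compl_iff, hAdef, mem_closedBall_zero_iff,
        not_le] at this
      exact this
    rw [hnorm y] at h1
    exact le_of_lt ((Real.lt_sqrt hρ'0).1 h1)
  have hb : (μ Aᶜ).toReal ≤ (Real.sqrt n)⁻¹ := by
    have h1 : μ Aᶜ ≤ ν {y : Fin k → ℝ | ρ' ^ 2 ≤ ∑ i, (y i) ^ 2} := by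
      rw [hμ, Measure.map_apply e.measurable hA.compl]
      exact measure_mono hpre
    have h2 : (μ Aᶜ).toReal ≤ (ν {y : Fin k → ℝ | ρ' ^ 2 ≤ ∑ i, (y i) ^ 2}).toReal :=
      ENNReal.toReal_mono (measure_ne_top _ _) h1
    exact h2.trans ((pi_gauss_conc k hv hc0 hc (ρ' ^ 2)).trans hconc)
  -- truncation argument
  set S := sSup (L '' N) with hSdef
  have hθN : θ ∈ N := hN (mem_closedBall_self hρ'0)
  have hNne : (L '' N).Nonempty := ⟨L θ, θ, hθN, rfl⟩
  have hbdd : BddAbove (L '' N) := ⟨M, by rintro x ⟨a, -, rfl⟩; exact hL_le a⟩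
  have hSM : S ≤ M := csSup_le hNne (by rintro x ⟨a, -, rfl⟩; exact hL_le a)
  have hS0 : 0 ≤ S := le_trans (hL_nonneg θ) (le_csSup hbdd ⟨θ, hθN, rfl⟩)
  have hf_meas : Measurable fun ε => L (θ + ε) := hL.comp (measurable_const_add θ)
  have hf_int : Integrable (fun ε => L (θ + ε)) μ := by
    refine Integrable.mono' (integrable_const M) hf_meas.aestronglyMeasurable ?_
    refine ae_of_all _ fun ε => ?_
    rw [Real.norm_eq_abs, abs_of_nonneg (hL_nonneg _)]
    exact hL_le _
  have hsplit : (∫ ε, L (θ + ε) ∂μ)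
      = (∫ ε in A, L (θ + ε) ∂μ) + ∫ ε in Aᶜ, L (θ + ε) ∂μ :=
    (integral_add_compl hA hf_int).symm
  have hboundA : (∫ ε in A, L (θ + ε) ∂μ) ≤ S * (μ A).toReal := by
    have h1 : ∀ ε ∈ A, L (θ + ε) ≤ S := by
      intro ε hε
      refine le_csSup hbdd ⟨θ + ε, hN ?_, rfl⟩
      rw [mem_closedBall, dist_eq_norm, add_sub_cancel_left]
      exact mem_closedBall_zero_iff.1 hε
    calc (∫ ε in A, L (θ + ε) ∂μ) ≤ ∫ _ in A, S ∂μ :=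
          setIntegral_mono_on hf_int.integrableOn (integrableOn_const (
            (measure_lt_top μ A).ne)) hA h1
      _ = (μ A).toReal * S := by rw [setIntegral_const, smul_eq_mul]; rfl
      _ = S * (μ A).toReal := mul_comm _ _
  have hboundB : (∫ ε in Aᶜ, L (θ + ε) ∂μ) ≤ M * (μ Aᶜ).toReal := by
    calc (∫ ε in Aᶜ, L (θ + ε) ∂μ) ≤ ∫ _ in Aᶜ, M ∂μ :=
          setIntegral_mono_on hf_int.integrableOn (integrableOn_const (
            (measure_lt_top μ Aᶜ).ne)) hA.compl (fun ε _ => hL_le _)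
      _ = (μ Aᶜ).toReal * M := by rw [setIntegral_const, smul_eq_mul]; rfl
      _ = M * (μ Aᶜ).toReal := mul_comm _ _
  have hab : (μ A).toReal + (μ Aᶜ).toReal = 1 := by
    rw [← ENNReal.toReal_add (measure_ne_top _ _) (measure_ne_top _ _),
      measure_add_measure_compl hA, measure_univ, ENNReal.toReal_one]
  set a := (μ A).toReal
  set b := (μ Aᶜ).toReal
  have hb0 : 0 ≤ b := ENNReal.toReal_nonneg
  have hq : 1 / Real.sqrt n = (Real.sqrt n)⁻¹ := one_div _
  have hprod : (M - S) * b ≤ (M - S) * (Real.sqrt n)⁻¹ :=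
    mul_le_mul_of_nonneg_left hb (sub_nonneg.2 hSM)
  calc (∫ ε, L (θ + ε) ∂μ) ≤ S * a + M * b := by rw [hsplit]; exact add_le_add hboundA hboundB
    _ ≤ (1 - 1 / Real.sqrt n) * S + M / Real.sqrt n := by
        rw [hq]
        have ha : a = 1 - b := by linarith
        rw [ha, div_eq_mul_inv]
        nlinarith [hprod]
end
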